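/- Let ρ, σ be density matrices with D_max(ρ‖σ) < ∞, let 0 < c < e^{D_max(ρ‖σ)}, and let f : [0,∞) → ℝ be convex, nondecreasing, differentiable with f(1) = 0 and f(0) ≥ 0. Define D_f(ρ‖σ) := f(0) + ∫₀^∞ f'(γ) Tr[σ {ρ > γσ}] dγ. Then the quantum Markov inequality Tr[σ {ρ > cσ}] ≤ D_f(ρ‖σ)/f(c) holds whenever f(c) > 0. -/

import Mathlib

open MeasureTheory Matrix
open scoped ComplexOrder
noncomputable section

/-- The positive part `(X)₊` of a Hermitian matrix, via continuous functional calculus. -/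
def mposPart {n : ℕ} (X : Matrix (Fin n) (Fin n) ℂ) : Matrix (Fin n) (Fin n) ℂ :=
  cfc (fun x : ℝ => max x 0) X

/-- The spectral projection of a Hermitian matrix onto its strictly positive part,
so that `projPos (A - γ • B)` is the projection `{A > γB}`. -/
def projPos {n : ℕ} (X : Matrix (Fin n) (Fin n) ℂ) : Matrix (Fin n) (Fin n) ℂ :=
  cfc (fun x : ℝ => if 0 < x then (1:ℝ) else 0) X

/-- The spectral projection of a Hermitian matrix onto its nonnegative part,
so that `projNonneg (γ • B - A)` is the projection `{A ≤ γB}`. -/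
def projNonneg {n : ℕ} (X : Matrix (Fin n) (Fin n) ℂ) : Matrix (Fin n) (Fin n) ℂ :=
  cfc (fun x : ℝ => if 0 ≤ x then (1:ℝ) else 0) X

/-- Matrix logarithm via functional calculus. -/
def mlog {n : ℕ} (X : Matrix (Fin n) (Fin n) ℂ) : Matrix (Fin n) (Fin n) ℂ :=
  cfc Real.log X

/-- Real matrix power via functional calculus (`Real.rpow`, so negative powers of
positive semidefinite matrices are taken on the support). -/
def mpow {n : ℕ} (X : Matrix (Fin n) (Fin n) ℂ) (a : ℝ) : Matrix (Fin n) (Fin n) ℂ :=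
  cfc (fun x : ℝ => x ^ a) X

/-- `D_max(ρ‖σ) = log inf {t : ρ ≤ t σ}`. -/
def Dmax {n : ℕ} (ρ σ : Matrix (Fin n) (Fin n) ℂ) : ℝ :=
  Real.log (sInf {t : ℝ | (t • σ - ρ).PosSemidef})

/-! Write `g γ = Tr[σ {ρ > γσ}]`. The projection `{ρ > γσ}` maximizes `Q ↦ Tr[(ρ - γσ) Q]` over
`0 ≤ Q ≤ 1`; comparing the maximizers for `γ₁ < γ₂` shows that `g` is antitone. It takes values in
`[0, 1]` and vanishes once `ρ ≤ γσ`, so `f' g` is integrable, and as `f' ≥ 0`,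
`∫₀^∞ f' g ≥ ∫₀^c f' g ≥ g(c) (f(c) - f(0))`.
Hence `g(c) f(c) ≤ f(0) g(c) + ∫₀^∞ f' g ≤ D_f(ρ‖σ)`. -/

open Set
open scoped MatrixOrder

section TraceOrder

variable {m 𝕜 : Type*} [Fintype m] [DecidableEq m] [RCLike 𝕜]

lemma Matrix.PosSemidef.re_trace_mul_nonneg {A B : Matrix m m 𝕜} (hA : A.PosSemidef)
    (hB : B.PosSemidef) : 0 ≤ RCLike.re (A * B).trace := by
  obtain ⟨C, rfl⟩ := CStarAlgebra.nonneg_iff_eq_star_mul_self.mp hB.nonneg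
  rw [← mul_assoc, trace_mul_comm, ← mul_assoc]
  exact (RCLike.nonneg_iff.mp (hA.mul_mul_conjTranspose_same C).trace_nonneg).1

end TraceOrder

section ProjPos

variable {n : ℕ} {X : Matrix (Fin n) (Fin n) ℂ}

lemma projPos_nonneg : 0 ≤ projPos X :=
  cfc_nonneg fun x _ => by split_ifs <;> norm_num

lemma projPos_le_one : projPos X ≤ 1 :=
  cfc_le_one _ X fun x _ => by split_ifs <;> norm_num

lemma projPos_eq_zero_of_nonpos (hX : X ≤ 0) : projPos X = 0 := by
  have hXsa : IsSelfAdjoint X := by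
    simpa using (neg_nonneg.mpr hX).posSemidef.isHermitian.isSelfAdjoint.neg
  have hspec : ∀ x ∈ spectrum ℝ X, x ≤ 0 :=
    (le_algebraMap_iff_spectrum_le (r := 0) hXsa).mp (by simpa using hX)
  rw [projPos, ← cfc_zero ℝ X]
  exact cfc_congr fun x hx => by simp [(hspec x hx).not_gt]

lemma mul_projPos (hX : X.IsHermitian) : X * projPos X = cfc (fun x : ℝ => max x 0) X := by
  rw [projPos]
  nth_rewrite 1 [← cfc_id' ℝ X hX.isSelfAdjoint]
  rw [← cfc_mul _ _ X (finite_real_spectrum.continuousOn _) (finite_real_spectrum.continuousOn _)]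
  refine cfc_congr fun x _ => ?_
  split_ifs with hx
  · simp [hx.le]
  · simp [not_lt.mp hx]

lemma cfc_max_sub_cfc_max_neg (hX : X.IsHermitian) :
    cfc (fun x : ℝ => max x 0) X - cfc (fun x : ℝ => max (-x) 0) X = X := by
  conv_rhs => rw [← cfc_id' ℝ X hX.isSelfAdjoint]
  rw [← cfc_sub ..]
  exact cfc_congr fun x _ => max_zero_sub_max_neg_zero_eq_self x

lemma re_trace_mul_le_re_trace_mul_projPos (hX : X.IsHermitian) {Q : Matrix (Fin n) (Fin n) ℂ}
    (hQ0 : 0 ≤ Q) (hQ1 : Q ≤ 1) : (X * Q).trace.re ≤ (X * projPos X).trace.re := by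
  set Xp := cfc (fun x : ℝ => max x 0) X
  set Xm := cfc (fun x : ℝ => max (-x) 0) X
  have hXp : Xp.PosSemidef := (cfc_nonneg fun x _ => le_max_right x 0).posSemidef
  have hXm : Xm.PosSemidef := (cfc_nonneg fun x _ => le_max_right (-x) 0).posSemidef
  have hXmQ := hXm.re_trace_mul_nonneg hQ0.posSemidef
  have hXpQ := hXp.re_trace_mul_nonneg (sub_nonneg.mpr hQ1).posSemidef
  calc (X * Q).trace.re = (Xp * Q).trace.re - (Xm * Q).trace.re := by
        rw [← cfc_max_sub_cfc_max_neg hX, sub_mul, trace_sub, Complex.sub_re]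
    _ ≤ (Xp * Q).trace.re + (Xp * (1 - Q)).trace.re := by
        simp only [RCLike.re_to_complex] at hXmQ hXpQ; linarith
    _ = (X * projPos X).trace.re := by
        rw [mul_projPos hX, ← Complex.add_re, ← trace_add, ← mul_add, add_sub_cancel, mul_one]

end ProjPos

section TailTrace

variable {n : ℕ} {ρ σ : Matrix (Fin n) (Fin n) ℂ}

def tailTrace (ρ σ : Matrix (Fin n) (Fin n) ℂ) (γ : ℝ) : ℝ :=
  (σ * projPos (ρ - γ • σ)).trace.re

lemma tailTrace_nonneg (hσ : σ.PosSemidef) (γ : ℝ) : 0 ≤ tailTrace ρ σ γ :=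
  hσ.re_trace_mul_nonneg projPos_nonneg.posSemidef

lemma tailTrace_le_re_trace (hσ : σ.PosSemidef) (γ : ℝ) : tailTrace ρ σ γ ≤ σ.trace.re := by
  have h := hσ.re_trace_mul_nonneg (sub_nonneg.mpr (projPos_le_one (X := ρ - γ • σ))).posSemidef
  rw [mul_sub, mul_one, trace_sub, RCLike.re_to_complex, Complex.sub_re] at h
  exact sub_nonneg.mp h

lemma tailTrace_eq_zero_of_le {γ : ℝ} (h : ρ ≤ γ • σ) : tailTrace ρ σ γ = 0 := by
  rw [tailTrace, projPos_eq_zero_of_nonpos (sub_nonpos.mpr h), mul_zero, trace_zero,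
    Complex.zero_re]

lemma re_trace_sub_smul_mul (γ : ℝ) (Q : Matrix (Fin n) (Fin n) ℂ) :
    ((ρ - γ • σ) * Q).trace.re = (ρ * Q).trace.re - γ * (σ * Q).trace.re := by
  simp only [sub_mul, trace_sub, Complex.sub_re, smul_mul_assoc, trace_smul, Complex.real_smul,
    Complex.re_ofReal_mul]

lemma antitone_tailTrace (hρ : ρ.IsHermitian) (hσ : σ.IsHermitian) : Antitone (tailTrace ρ σ) := by
  intro γ₁ γ₂ h12
  have herm : ∀ γ : ℝ, (ρ - γ • σ).IsHermitian := fun γ =>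
    hρ.sub (hσ.smul (IsSelfAdjoint.all γ))
  have h₁ := re_trace_mul_le_re_trace_mul_projPos (herm γ₁) (projPos_nonneg (X := ρ - γ₂ • σ))
    projPos_le_one
  have h₂ := re_trace_mul_le_re_trace_mul_projPos (herm γ₂) (projPos_nonneg (X := ρ - γ₁ • σ))
    projPos_le_one
  rw [re_trace_sub_smul_mul, re_trace_sub_smul_mul] at h₁ h₂
  have key : (γ₂ - γ₁) * (tailTrace ρ σ γ₂ - tailTrace ρ σ γ₁) ≤ 0 := by
    unfold tailTrace; linarith
  rcases h12.eq_or_lt with rfl | hlt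
  · exact le_rfl
  · exact sub_nonpos.mp (nonpos_of_mul_nonpos_right key (sub_pos.mpr hlt))

end TailTrace

section DerivativeIntegral

variable {f g : ℝ → ℝ}

lemma integral_derivWithin_Ici_eq_sub {a b : ℝ} (hab : a ≤ b)
    (hdiff : DifferentiableOn ℝ f (Ici a))
    (hint : IntervalIntegrable (derivWithin f (Ici a)) volume a b) :
    ∫ x in a..b, derivWithin f (Ici a) x = f b - f a := by
  refine intervalIntegral.integral_eq_sub_of_hasDerivAt_of_le hab
    (hdiff.continuousOn.mono Icc_subset_Ici_self) (fun x hx => ?_) hint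
  rw [derivWithin_of_mem_nhds (Ici_mem_nhds hx.1)]
  exact ((hdiff x hx.1.le).differentiableAt (Ici_mem_nhds hx.1)).hasDerivAt

lemma ConvexOn.integrableOn_derivWithin_Icc (hconv : ConvexOn ℝ (Ici 0) f)
    (hdiff : DifferentiableOn ℝ f (Ici 0)) (t : ℝ) :
    IntegrableOn (derivWithin f (Ici 0)) (Icc 0 t) :=
  ((hconv.monotoneOn_derivWithin hdiff).mono Icc_subset_Ici_self).integrableOn_isCompact
    isCompact_Icc

lemma ConvexOn.integrableOn_derivWithin_mul (hconv : ConvexOn ℝ (Ici 0) f)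
    (hdiff : DifferentiableOn ℝ f (Ici 0)) (hg : Antitone g) (hg0 : ∀ γ, 0 ≤ g γ) {t : ℝ}
    (hgt : g t = 0) :
    IntegrableOn (fun γ => derivWithin f (Ici 0) γ * g γ) (Ioi 0) := by
  have hbdd : ∀ γ ∈ Icc 0 t, ‖g γ‖ ≤ g 0 := fun γ hγ => by
    rw [Real.norm_of_nonneg (hg0 γ)]
    exact hg hγ.1
  have hIcc : IntegrableOn (fun γ => derivWithin f (Ici 0) γ * g γ) (Icc 0 t) :=
    (hconv.integrableOn_derivWithin_Icc hdiff t).mul_bdd hg.measurable.aestronglyMeasurable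
      (ae_restrict_of_forall_mem measurableSet_Icc hbdd)
  refine hIcc.of_forall_sdiff_eq_zero measurableSet_Ioi fun γ hγ => ?_
  have htγ : t ≤ γ := by
    by_contra! hγt
    exact hγ.2 ⟨le_of_lt hγ.1, hγt.le⟩
  rw [le_antisymm (hgt ▸ hg htγ) (hg0 γ), mul_zero]

theorem sub_mul_le_integral_derivWithin_mul (hconv : ConvexOn ℝ (Ici 0) f)
    (hmono : MonotoneOn f (Ici 0)) (hdiff : DifferentiableOn ℝ f (Ici 0)) (hg : Antitone g)
    (hg0 : ∀ γ, 0 ≤ g γ) {t c : ℝ} (hgt : g t = 0) (hc : 0 ≤ c) :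
    (f c - f 0) * g c ≤ ∫ γ in Ioi 0, derivWithin f (Ici 0) γ * g γ := by
  have hF : IntegrableOn (derivWithin f (Ici 0)) (Ioc 0 c) :=
    (hconv.integrableOn_derivWithin_Icc hdiff c).mono_set Ioc_subset_Icc_self
  have hFg := hconv.integrableOn_derivWithin_mul hdiff hg hg0 hgt
  calc (f c - f 0) * g c = ∫ γ in Ioc 0 c, derivWithin f (Ici 0) γ * g c := by
        rw [integral_mul_const, ← intervalIntegral.integral_of_le hc,
          integral_derivWithin_Ici_eq_sub hc hdiff
            ((intervalIntegrable_iff_integrableOn_Ioc_of_le hc).mpr hF)]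
    _ ≤ ∫ γ in Ioc 0 c, derivWithin f (Ici 0) γ * g γ :=
        setIntegral_mono_on (hF.mul_const _) (hFg.mono_set Ioc_subset_Ioi_self)
          measurableSet_Ioc fun γ hγ => mul_le_mul_of_nonneg_left (hg hγ.2) hmono.derivWithin_nonneg
    _ ≤ ∫ γ in Ioi 0, derivWithin f (Ici 0) γ * g γ :=
        setIntegral_mono_set hFg (ae_restrict_of_forall_mem measurableSet_Ioi fun γ _ =>
          mul_nonneg hmono.derivWithin_nonneg (hg0 γ)) Ioc_subset_Ioi_self.eventuallyLE

end DerivativeIntegral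

theorem quantum_markov_inequality_general {n : ℕ} (ρ σ : Matrix (Fin n) (Fin n) ℂ)
    (hρ : ρ.PosSemidef) (hσ : σ.PosSemidef) (hσ1 : σ.trace = 1)
    (hfin : ∃ t : ℝ, (t • σ - ρ).PosSemidef)
    (c : ℝ) (hc0 : 0 < c)
    (f : ℝ → ℝ) (hconv : ConvexOn ℝ (Set.Ici 0) f) (hmono : MonotoneOn f (Set.Ici 0))
    (hdiff : DifferentiableOn ℝ f (Set.Ici 0)) (hf0 : 0 ≤ f 0)
    (hfc : 0 < f c) :
    (Matrix.trace (σ * projPos (ρ - c • σ))).re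
      ≤ (f 0 + ∫ γ in Set.Ioi (0:ℝ),
            derivWithin f (Set.Ici 0) γ * (Matrix.trace (σ * projPos (ρ - γ • σ))).re)
        / f c := by
  obtain ⟨t, ht⟩ := hfin
  have hmarkov := sub_mul_le_integral_derivWithin_mul hconv hmono hdiff
    (antitone_tailTrace hρ.isHermitian hσ.isHermitian) (tailTrace_nonneg hσ)
    (tailTrace_eq_zero_of_le ht) hc0.le
  have hle_one : tailTrace ρ σ c ≤ 1 := by
    simpa [hσ1] using tailTrace_le_re_trace (ρ := ρ) hσ c
  change tailTrace ρ σ c ≤ (f 0 + ∫ γ in Ioi 0, derivWithin f (Ici 0) γ * tailTrace ρ σ γ) / f c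
  rw [le_div_iff₀ hfc]
  nlinarith [mul_le_mul_of_nonneg_left hle_one hf0]

/-- quantum Markov inequality: for density matrices with
`D_max(ρ‖σ) < ∞`, any `0 < c < e^{D_max(ρ‖σ)}` and any convex nondecreasing
differentiable `f` on `[0,∞)` with `f(1) = 0`, `f(0) ≥ 0`, and `f(c) > 0`,
`Tr[σ{ρ > cσ}] ≤ D_f(ρ‖σ)/f(c)` where
`D_f(ρ‖σ) = f(0) + ∫₀^∞ f'(γ) Tr[σ{ρ > γσ}] dγ`. -/
theorem quantum_markov_inequality {n : ℕ} (ρ σ : Matrix (Fin n) (Fin n) ℂ)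
    (hρ : ρ.PosSemidef) (hσ : σ.PosSemidef) (hρ1 : ρ.trace = 1) (hσ1 : σ.trace = 1)
    (hfin : ∃ t : ℝ, (t • σ - ρ).PosSemidef)
    (c : ℝ) (hc0 : 0 < c) (hc : c < Real.exp (Dmax ρ σ))
    (f : ℝ → ℝ) (hconv : ConvexOn ℝ (Set.Ici 0) f) (hmono : MonotoneOn f (Set.Ici 0))
    (hdiff : DifferentiableOn ℝ f (Set.Ici 0)) (hf1 : f 1 = 0) (hf0 : 0 ≤ f 0)
    (hfc : 0 < f c) :
    (Matrix.trace (σ * projPos (ρ - c • σ))).re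
      ≤ (f 0 + ∫ γ in Set.Ioi (0:ℝ),
            derivWithin f (Set.Ici 0) γ * (Matrix.trace (σ * projPos (ρ - γ • σ))).re)
        / f c :=
  quantum_markov_inequality_general ρ σ hρ hσ hσ1 hfin c hc0 f hconv hmono hdiff hf0 hfc
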